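/- arXiv:2001.02191 — 2 statements merged into one kernel-verified Lean document; each statement's English description precedes it below -/
import Mathlib

section
/- Let G be a connected finite simple graph on n vertices, and let s, t be vertices of G. Let G' be the simple graph obtained from G by attaching two new paths of 2n new vertices each: new vertices p_1, …, p_{2n} with edges {s,p_1} and {p_i,p_{i+1}} for 1 ≤ i ≤ 2n−1, and new vertices q_1, …, q_{2n} with edges {t,q_1} and {q_i,q_{i+1}} for 1 ≤ i ≤ 2n−1. Then the two chain endpoints satisfy ecc_{G'}(p_{2n}) = ecc_{G'}(q_{2n}) = dist_{G'}(p_{2n}, q_{2n}) = diam(G') = 4n + dist_G(s,t). -/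
/-- The eccentricity of a vertex `u` in a finite simple graph: the maximum of the
distances from `u` to the other vertices. -/
noncomputable def gecc {α : Type} [Fintype α] (H : SimpleGraph α) (u : α) : ℕ :=
  Finset.univ.sup fun v => H.dist u v

/-- The diameter of a finite simple graph: the maximum distance between two vertices. -/
noncomputable def gdiam {α : Type} [Fintype α] (H : SimpleGraph α) : ℕ :=
  Finset.univ.sup fun p : α × α => H.dist p.1 p.2

/-- The graph `G'` obtained from `G` by attaching two new paths (chains) of `2n` new
vertices each: `p_1, …, p_{2n}` (the vertices `Sum.inr (Sum.inl i)`, `p_i` having index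
`i - 1`) with edges `{s,p_1}` and `{p_i, p_{i+1}}`, and `q_1, …, q_{2n}` (the vertices
`Sum.inr (Sum.inr i)`) with edges `{t,q_1}` and `{q_i, q_{i+1}}`. -/
def attachChains {V : Type} (G : SimpleGraph V) (s t : V) (n : ℕ) :
    SimpleGraph (V ⊕ (Fin (2 * n) ⊕ Fin (2 * n))) :=
  SimpleGraph.fromRel fun x y =>
    (∃ u v : V, G.Adj u v ∧ x = Sum.inl u ∧ y = Sum.inl v) ∨
    (∃ h : 0 < 2 * n, x = Sum.inl s ∧ y = Sum.inr (Sum.inl ⟨0, h⟩)) ∨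
    (∃ i j : Fin (2 * n), (i : ℕ) + 1 = (j : ℕ) ∧
      x = Sum.inr (Sum.inl i) ∧ y = Sum.inr (Sum.inl j)) ∨
    (∃ h : 0 < 2 * n, x = Sum.inl t ∧ y = Sum.inr (Sum.inr ⟨0, h⟩)) ∨
    (∃ i j : Fin (2 * n), (i : ℕ) + 1 = (j : ℕ) ∧
      x = Sum.inr (Sum.inr i) ∧ y = Sum.inr (Sum.inr j))

/-! Every vertex of `G'` is a vertex of `G` or lies on a chain within distance `2n` of `s` or
`t`, and distances in `G` are less than `n`; routing through `G` therefore bounds every distance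
in `G'` by `4n + dist_G(s,t)`. Conversely, the signed position along the line
`p_{2n}, …, p_1, s, …, t, q_1, …, q_{2n}`, extended to `G` by `dist_G(s, ·)`, changes by at
most one along each edge of `G'` and differs by `4n + dist_G(s,t)` between the chain ends. -/

namespace SimpleGraph

variable {V : Type} {G : SimpleGraph V}

lemma dist_lt_card [Fintype V] (u v : V) : G.dist u v < Fintype.card V := by
  by_cases huv : G.Reachable u v
  · obtain ⟨p, hp, hlen⟩ := huv.exists_path_of_dist
    exact hlen ▸ hp.length_lt
  · rw [dist_eq_zero_of_not_reachable huv]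
    exact Fintype.card_pos_iff.mpr ⟨u⟩

lemma Walk.natAbs_sub_le_length (f : V → ℤ) (hf : ∀ x y, G.Adj x y → (f x - f y).natAbs ≤ 1)
    {u v : V} (w : G.Walk u v) : (f u - f v).natAbs ≤ w.length := by
  induction w with
  | nil => simp
  | cons hadj w ih =>
    have := hf _ _ hadj
    rw [length_cons]
    omega

lemma Reachable.natAbs_sub_le_dist (f : V → ℤ)
    (hf : ∀ x y, G.Adj x y → (f x - f y).natAbs ≤ 1) {u v : V} (h : G.Reachable u v) :
    (f u - f v).natAbs ≤ G.dist u v := by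
  obtain ⟨w, hw⟩ := h.exists_walk_length_eq_dist
  exact hw ▸ w.natAbs_sub_le_length f hf

end SimpleGraph

lemma gecc_eq_of_forall_dist_le {α : Type} [Fintype α] {H : SimpleGraph α} {u w : α} {D : ℕ}
    (hle : ∀ v, H.dist u v ≤ D) (hw : H.dist u w = D) : gecc H u = D :=
  le_antisymm (Finset.sup_le fun v _ => hle v) (hw ▸ Finset.le_sup (Finset.mem_univ w))

lemma gdiam_eq_of_forall_dist_le {α : Type} [Fintype α] {H : SimpleGraph α} {u w : α} {D : ℕ}
    (hle : ∀ x y, H.dist x y ≤ D) (hw : H.dist u w = D) : gdiam H = D :=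
  le_antisymm (Finset.sup_le fun p _ => hle p.1 p.2)
    (hw ▸ Finset.le_sup (f := fun p : α × α => H.dist p.1 p.2) (Finset.mem_univ (u, w)))

namespace attachChains

open SimpleGraph

variable {V : Type} {G : SimpleGraph V} {s t : V} {n : ℕ}

-- A vertex `x` lies on the chain hanging from `anchor x`, at distance `height x` from it.
def anchor (s t : V) (n : ℕ) : V ⊕ (Fin (2 * n) ⊕ Fin (2 * n)) → V
  | Sum.inl u => u
  | Sum.inr (Sum.inl _) => s
  | Sum.inr (Sum.inr _) => t

def height : V ⊕ (Fin (2 * n) ⊕ Fin (2 * n)) → ℕ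
  | Sum.inl _ => 0
  | Sum.inr (Sum.inl i) => i + 1
  | Sum.inr (Sum.inr i) => i + 1

lemma exists_walk_to_left_chain (j : ℕ) (hj : j < 2 * n) :
    ∃ w : (attachChains G s t n).Walk (Sum.inl s) (Sum.inr (Sum.inl ⟨j, hj⟩)),
      w.length = j + 1 := by
  induction j with
  | zero => exact ⟨Walk.cons (by simp [attachChains]; omega) .nil, rfl⟩
  | succ j ih =>
    obtain ⟨w, hw⟩ := ih (by omega)
    exact ⟨w.concat (by simp [attachChains]), by simp [hw]⟩

lemma exists_walk_to_right_chain (j : ℕ) (hj : j < 2 * n) :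
    ∃ w : (attachChains G s t n).Walk (Sum.inl t) (Sum.inr (Sum.inr ⟨j, hj⟩)),
      w.length = j + 1 := by
  induction j with
  | zero => exact ⟨Walk.cons (by simp [attachChains]; omega) .nil, rfl⟩
  | succ j ih =>
    obtain ⟨w, hw⟩ := ih (by omega)
    exact ⟨w.concat (by simp [attachChains]), by simp [hw]⟩

lemma exists_walk_anchor (x : V ⊕ (Fin (2 * n) ⊕ Fin (2 * n))) :
    ∃ w : (attachChains G s t n).Walk (Sum.inl (anchor s t n x)) x, w.length = height x := by
  rcases x with u | i | i
  · exact ⟨.nil, rfl⟩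
  · exact exists_walk_to_left_chain i i.2
  · exact exists_walk_to_right_chain i i.2

lemma exists_walk_inl (hconn : G.Connected) (u v : V) :
    ∃ w : (attachChains G s t n).Walk (Sum.inl u) (Sum.inl v), w.length = G.dist u v := by
  obtain ⟨w, hw⟩ := hconn.exists_walk_length_eq_dist u v
  let f : G →g attachChains G s t n := ⟨Sum.inl, fun h => by simp [attachChains, h, h.ne]⟩
  exact ⟨w.map f, by rw [Walk.length_map, hw]⟩

lemma exists_walk_via_anchors (hconn : G.Connected) (x y : V ⊕ (Fin (2 * n) ⊕ Fin (2 * n))) :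
    ∃ w : (attachChains G s t n).Walk x y,
      w.length = height x + G.dist (anchor s t n x) (anchor s t n y) + height y := by
  obtain ⟨wx, hwx⟩ := exists_walk_anchor (G := G) (s := s) (t := t) x
  obtain ⟨wy, hwy⟩ := exists_walk_anchor (G := G) (s := s) (t := t) y
  obtain ⟨w, hw⟩ :=
    exists_walk_inl (s := s) (t := t) (n := n) hconn (anchor s t n x) (anchor s t n y)
  exact ⟨wx.reverse.append (w.append wy), by
    simp only [Walk.length_append, Walk.length_reverse, hwx, hwy, hw]; omega⟩

lemma dist_le_four_mul_add_dist (hconn : G.Connected) (hG : ∀ u v, G.dist u v ≤ 2 * n)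
    (x y : V ⊕ (Fin (2 * n) ⊕ Fin (2 * n))) :
    (attachChains G s t n).dist x y ≤ 4 * n + G.dist s t := by
  obtain ⟨w, hw⟩ := exists_walk_via_anchors (s := s) (t := t) hconn x y
  refine (SimpleGraph.dist_le w).trans (hw ▸ ?_)
  have hxy := hG (anchor s t n x) (anchor s t n y)
  rcases x with u | i | i <;> rcases y with v | j | j <;>
    simp only [height, anchor, dist_self, dist_comm (u := t) (v := s)] at hxy ⊢ <;> omega

noncomputable def potential (G : SimpleGraph V) (s t : V) (n : ℕ) :
    V ⊕ (Fin (2 * n) ⊕ Fin (2 * n)) → ℤ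
  | Sum.inl u => G.dist s u
  | Sum.inr (Sum.inl i) => -((i : ℕ) + 1)
  | Sum.inr (Sum.inr i) => G.dist s t + ((i : ℕ) + 1)

lemma natAbs_potential_sub_le_one {x y : V ⊕ (Fin (2 * n) ⊕ Fin (2 * n))}
    (h : (attachChains G s t n).Adj x y) :
    (potential G s t n x - potential G s t n y).natAbs ≤ 1 := by
  rw [attachChains, fromRel_adj] at h
  obtain ⟨-, h | h⟩ := h <;>
  rcases h with ⟨u, v, huv, rfl, rfl⟩ | ⟨_, rfl, rfl⟩ | ⟨i, j, hij, rfl, rfl⟩ | ⟨_, rfl, rfl⟩ |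
    ⟨i, j, hij, rfl, rfl⟩
  all_goals
    simp only [potential, dist_self]
    first
    | omega
    | have := huv.diff_dist_adj (u := s); omega

lemma dist_chain_ends (hconn : G.Connected) (hG : ∀ u v, G.dist u v ≤ 2 * n) (i : Fin (2 * n))
    (hi : (i : ℕ) = 2 * n - 1) :
    (attachChains G s t n).dist (Sum.inr (Sum.inl i)) (Sum.inr (Sum.inr i)) =
      4 * n + G.dist s t := by
  refine le_antisymm (dist_le_four_mul_add_dist hconn hG _ _) ?_
  obtain ⟨w, -⟩ := exists_walk_via_anchors (s := s) (t := t) hconn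
    (Sum.inr (Sum.inl i)) (Sum.inr (Sum.inr i))
  have := w.reachable.natAbs_sub_le_dist _ fun _ _ => natAbs_potential_sub_le_one
  simp only [potential] at this
  omega

end attachChains

/-- if `G` is a connected finite simple graph on `n` vertices and `s t` are
vertices of `G`, then in the graph `G'` obtained by attaching chains of `2n` new vertices
to `s` and to `t`, the chain endpoints `p_{2n}` (the vertex `Sum.inr (Sum.inl i)` with
`i = 2n - 1`) and `q_{2n}` (the vertex `Sum.inr (Sum.inr i)`) satisfy
`ecc(p_{2n}) = ecc(q_{2n}) = dist(p_{2n}, q_{2n}) = diam(G') = 4n + dist_G(s,t)`. -/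
theorem stmt_6 {V : Type} [Fintype V] (n : ℕ) (hcard : Fintype.card V = n)
    (G : SimpleGraph V) (hconn : G.Connected) (s t : V) :
    ∀ i : Fin (2 * n), (i : ℕ) = 2 * n - 1 →
      gecc (attachChains G s t n) (Sum.inr (Sum.inl i)) = 4 * n + G.dist s t ∧
      gecc (attachChains G s t n) (Sum.inr (Sum.inr i)) = 4 * n + G.dist s t ∧
      (attachChains G s t n).dist (Sum.inr (Sum.inl i)) (Sum.inr (Sum.inr i))
        = 4 * n + G.dist s t ∧
      gdiam (attachChains G s t n) = 4 * n + G.dist s t := by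
  intro i hi
  have hG : ∀ u v, G.dist u v ≤ 2 * n := fun u v => by
    have := G.dist_lt_card u v
    omega
  have hle := attachChains.dist_le_four_mul_add_dist (s := s) (t := t) hconn hG
  have hends := attachChains.dist_chain_ends (s := s) (t := t) hconn hG i hi
  exact ⟨gecc_eq_of_forall_dist_le (hle _) hends,
    gecc_eq_of_forall_dist_le (hle _) (SimpleGraph.dist_comm.trans hends), hends,
    gdiam_eq_of_forall_dist_le hle hends⟩
end

section
/- Let G be a connected finite simple graph on n vertices and let s, t be vertices of G. Let G' be the simple graph obtained from G by attaching two new paths of 2n new vertices each: new vertices p_1, …, p_{2n} with edges {s,p_1} and {p_i,p_{i+1}} for 1 ≤ i ≤ 2n−1, and new vertices q_1, …, q_{2n} with edges {t,q_1} and {q_i,q_{i+1}} for 1 ≤ i ≤ 2n−1. Let K be the simple graph obtained from two disjoint copies of G' by identifying the vertex q_{2n} of the first copy with the vertex p_{2n} of the second copy, and call the identified vertex c. Then radius(K) = 4n + dist_G(s,t), and c is the unique vertex of K of minimum eccentricity. -/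
/-- The radius of a finite simple graph: the minimum eccentricity of a vertex. -/
noncomputable def gradius {α : Type} [Fintype α] (H : SimpleGraph α) : ℕ :=
  ⨅ u, gecc H u

/-- The graph obtained from two disjoint copies of `H` by identifying the vertex `b` of the
first copy with the vertex `a` of the second copy.  The first copy is `Sum.inl`, the second
copy is `Sum.inr` (omitting `a`, which is identified with `Sum.inl b`); the identified
vertex `c` is `Sum.inl b`. -/
def glueGraph {α : Type} [DecidableEq α] (H : SimpleGraph α) (b a : α) :
    SimpleGraph (α ⊕ {x : α // x ≠ a}) :=
  SimpleGraph.fromRel fun x y =>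
    (∃ u v : α, H.Adj u v ∧ x = Sum.inl u ∧ y = Sum.inl v) ∨
    (∃ u v : {x : α // x ≠ a}, H.Adj u.1 v.1 ∧ x = Sum.inr u ∧ y = Sum.inr v) ∨
    (∃ v : {x : α // x ≠ a}, H.Adj a v.1 ∧ x = Sum.inl b ∧ y = Sum.inr v)

open SimpleGraph

section Metric

variable {α β : Type*} {H : SimpleGraph α} {H' : SimpleGraph β}

theorem SimpleGraph.Adj.abs_dist_sub_dist_le_one {u v : α} (w : α) (h : H.Adj u v) :
    |(H.dist w u : ℤ) - H.dist w v| ≤ 1 := by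
  rcases h.diff_dist_adj (u := w) with h | h | h <;> rw [abs_le] <;> constructor <;> omega

theorem SimpleGraph.Reachable.abs_sub_le_dist {f : α → ℤ}
    (hf : ∀ ⦃u v⦄, H.Adj u v → |f u - f v| ≤ 1) {x y : α} (h : H.Reachable x y) :
    |f x - f y| ≤ H.dist x y := by
  obtain ⟨p, hp⟩ := h.exists_walk_length_eq_dist
  rw [← hp]
  clear hp h
  induction p with
  | nil => simp
  | @cons u v w huv p ih =>
    calc |f u - f w| ≤ |f u - f v| + |f v - f w| := abs_sub_le _ _ _
      _ ≤ 1 + p.length := add_le_add (hf huv) ih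
      _ = (p.cons huv).length := by push_cast [Walk.length_cons]; ring

theorem abs_sub_le_one_of_fromRel_adj {r : α → α → Prop} {f : α → ℤ}
    (hr : ∀ ⦃u v⦄, r u v → |f u - f v| ≤ 1) {x y : α} (h : (fromRel r).Adj x y) :
    |f x - f y| ≤ 1 :=
  ((fromRel_adj r x y).1 h).2.elim (fun h => hr h) fun h => abs_sub_comm (f x) (f y) ▸ hr h

theorem SimpleGraph.Hom.edist_le (f : H →g H') (u v : α) :
    H'.edist (f u) (f v) ≤ H.edist u v := by
  by_cases h : H.Reachable u v
  · obtain ⟨p, hp⟩ := h.exists_walk_length_eq_edist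
    exact hp ▸ (Walk.length_map f p ▸ SimpleGraph.edist_le (p.map f))
  · simp [edist_eq_top_of_not_reachable h]

theorem SimpleGraph.Hom.dist_le (f : H →g H') {u v : α} (h : H.Reachable u v) :
    H'.dist (f u) (f v) ≤ H.dist u v := by
  obtain ⟨p, hp⟩ := h.exists_walk_length_eq_dist
  exact hp ▸ (Walk.length_map f p ▸ SimpleGraph.dist_le (p.map f))

theorem SimpleGraph.Iso.edist_eq (e : H ≃g H') (u v : α) : H'.edist (e u) (e v) = H.edist u v :=
  le_antisymm (e.toHom.edist_le u v) <| by
    simpa using e.symm.toHom.edist_le (e u) (e v)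

theorem SimpleGraph.Iso.dist_eq (e : H ≃g H') (u v : α) : H'.dist (e u) (e v) = H.dist u v := by
  rw [SimpleGraph.dist, SimpleGraph.dist, e.edist_eq]

end Metric

section Eccentricity

variable {α β : Type} [Fintype α] [Fintype β] {H : SimpleGraph α}

theorem dist_le_gecc (u v : α) : H.dist u v ≤ gecc H u :=
  Finset.le_sup (f := fun v => H.dist u v) (Finset.mem_univ v)

theorem exists_dist_eq_gecc [Nonempty α] (u : α) : ∃ v, H.dist u v = gecc H u := by
  obtain ⟨v, -, hv⟩ := Finset.exists_mem_eq_sup _ Finset.univ_nonempty (fun v => H.dist u v)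
  exact ⟨v, hv.symm⟩

theorem SimpleGraph.Iso.gecc_eq {H' : SimpleGraph β} (e : H ≃g H') (u : α) :
    gecc H' (e u) = gecc H u := by
  refine le_antisymm (Finset.sup_le fun w _ => ?_) (Finset.sup_le fun v _ => ?_)
  · rw [← e.apply_symm_apply w, e.dist_eq]
    exact dist_le_gecc _ _
  · rw [← e.dist_eq]
    exact dist_le_gecc _ _

theorem gradius_eq_gecc_of_forall_lt {c : α} (h : ∀ x ≠ c, gecc H c < gecc H x) :
    gradius H = gecc H c := by
  have : Nonempty α := ⟨c⟩
  refine le_antisymm (ciInf_le (OrderBot.bddBelow _) c) (le_ciInf fun x => ?_)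
  by_cases hx : x = c
  · rw [hx]
  · exact (h x hx).le

end Eccentricity

section Glue

variable {α : Type} [DecidableEq α] (H : SimpleGraph α) (b a : α)

def glueInl : H →g glueGraph H b a where
  toFun := Sum.inl
  map_rel' {u v} h := (fromRel_adj _ _ _).2
    ⟨Sum.inl_injective.ne h.ne, Or.inl (Or.inl ⟨u, v, h, rfl, rfl⟩)⟩

/-- The second copy of `H`, in which `a` is the identified vertex `Sum.inl b`. -/
def glueInr : H →g glueGraph H b a where
  toFun w := if h : w = a then Sum.inl b else Sum.inr ⟨w, h⟩
  map_rel' {u v} h := by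
    rw [glueGraph, fromRel_adj]
    by_cases hu : u = a <;> by_cases hv : v = a
    · exact absurd (hu.trans hv.symm) h.ne
    · rw [dif_pos hu, dif_neg hv]
      exact ⟨by simp, Or.inl (Or.inr (Or.inr ⟨⟨v, hv⟩, hu ▸ h, rfl, rfl⟩))⟩
    · rw [dif_neg hu, dif_pos hv]
      exact ⟨by simp, Or.inr (Or.inr (Or.inr ⟨⟨u, hu⟩, hv ▸ h.symm, rfl, rfl⟩))⟩
    · simp only [dif_neg hu, dif_neg hv]
      exact ⟨by simpa [Subtype.ext_iff] using h.ne,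
        Or.inl (Or.inr (Or.inl ⟨⟨u, hu⟩, ⟨v, hv⟩, h, rfl, rfl⟩))⟩

theorem glueInr_of_ne {w : α} (hw : w ≠ a) : glueInr H b a w = Sum.inr ⟨w, hw⟩ :=
  dif_neg hw

theorem glueInr_self : glueInr H b a a = Sum.inl b :=
  dif_pos rfl

/-- Signed distance to the identified vertex: positive on the first copy, negative on the
second. -/
noncomputable def gluePotential : α ⊕ {x : α // x ≠ a} → ℤ :=
  Sum.elim (fun w => H.dist b w) (fun w => -H.dist a w)

variable {H b a}

omit [DecidableEq α] in
theorem gluePotential_inl (w : α) : gluePotential H b a (Sum.inl w) = H.dist b w := rfl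

theorem gluePotential_glueInr (w : α) : gluePotential H b a (glueInr H b a w) = -H.dist a w := by
  by_cases hw : w = a
  · subst hw
    simp [glueInr_self, gluePotential]
  · simp [glueInr_of_ne H b a hw, gluePotential]

theorem abs_gluePotential_sub_le_one ⦃x y : α ⊕ {x : α // x ≠ a}⦄
    (h : (glueGraph H b a).Adj x y) : |gluePotential H b a x - gluePotential H b a y| ≤ 1 := by
  refine abs_sub_le_one_of_fromRel_adj ?_ h
  rintro _ _ (⟨u, v, huv, rfl, rfl⟩ | ⟨u, v, huv, rfl, rfl⟩ | ⟨v, hav, rfl, rfl⟩)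
  · exact huv.abs_dist_sub_dist_le_one b
  · simpa [gluePotential, abs_sub_comm, neg_add_eq_sub] using huv.abs_dist_sub_dist_le_one a
  · simp [gluePotential, dist_eq_one_iff_adj.2 hav]

omit [DecidableEq α] in
theorem gluePotential_eq_zero_iff (hH : H.Connected) {x : α ⊕ {x : α // x ≠ a}} :
    gluePotential H b a x = 0 ↔ x = Sum.inl b := by
  rcases x with w | ⟨w, hw⟩
  · simp [gluePotential, hH.dist_eq_zero_iff, eq_comm]
  · simp [gluePotential, hH.dist_eq_zero_iff, eq_comm (a := a), hw]

theorem reachable_glueGraph_inl (hH : H.Connected) (x : α ⊕ {x : α // x ≠ a}) :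
    (glueGraph H b a).Reachable (Sum.inl b) x := by
  rcases x with w | ⟨w, hw⟩
  · exact (hH b w).map (glueInl H b a)
  · simpa [glueInr_self, glueInr_of_ne H b a hw] using (hH a w).map (glueInr H b a)

variable [Fintype α]

theorem gecc_glueGraph_inl_le (hH : H.Connected) :
    gecc (glueGraph H b a) (Sum.inl b) ≤ max (gecc H b) (gecc H a) := by
  refine Finset.sup_le fun x _ => ?_
  rcases x with w | ⟨w, hw⟩
  · exact ((glueInl H b a).dist_le (hH b w)).trans ((dist_le_gecc b w).trans (le_max_left _ _))
  · have := (glueInr H b a).dist_le (hH a w)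
    rw [glueInr_self, glueInr_of_ne H b a hw] at this
    exact this.trans ((dist_le_gecc a w).trans (le_max_right _ _))

/-- The witnesses are the vertices farthest from `a` in the second copy and from `b` in the
first. -/
theorem le_gecc_glueGraph (hH : H.Connected) (x : α ⊕ {x : α // x ≠ a}) :
    gluePotential H b a x + gecc H a ≤ gecc (glueGraph H b a) x ∧
      gecc H b - gluePotential H b a x ≤ gecc (glueGraph H b a) x := by
  have : Nonempty α := hH.nonempty
  have hlow (y) := ((reachable_glueGraph_inl (b := b) hH x).symm.trans
    (reachable_glueGraph_inl hH y)).abs_sub_le_dist abs_gluePotential_sub_le_one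
  obtain ⟨v, hv⟩ := exists_dist_eq_gecc (H := H) a
  obtain ⟨w, hw⟩ := exists_dist_eq_gecc (H := H) b
  have h₁ := hlow (glueInr H b a v)
  have h₂ := hlow (Sum.inl w)
  have e₁ := dist_le_gecc (H := glueGraph H b a) x (glueInr H b a v)
  have e₂ := dist_le_gecc (H := glueGraph H b a) x (Sum.inl w)
  rw [gluePotential_glueInr, hv, abs_le] at h₁
  rw [gluePotential_inl, hw, abs_le] at h₂
  constructor <;> omega

theorem gecc_glueGraph_inl (hH : H.Connected) (hab : gecc H a = gecc H b) :
    gecc (glueGraph H b a) (Sum.inl b) = gecc H b := by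
  have hle := gecc_glueGraph_inl_le (b := b) (a := a) hH
  have hge := (le_gecc_glueGraph (b := b) (a := a) hH (Sum.inl b)).1
  rw [gluePotential_inl, SimpleGraph.dist_self] at hge
  rw [hab, max_self] at hle
  omega

theorem gecc_glueGraph_inl_lt (hH : H.Connected) (hab : gecc H a = gecc H b)
    {x : α ⊕ {x : α // x ≠ a}} (hx : x ≠ Sum.inl b) :
    gecc (glueGraph H b a) (Sum.inl b) < gecc (glueGraph H b a) x := by
  have hφ := (gluePotential_eq_zero_iff hH).not.2 hx
  have := le_gecc_glueGraph (b := b) hH x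
  rw [gecc_glueGraph_inl hH hab]
  omega

end Glue

section Chains

variable {V : Type} {G : SimpleGraph V} {s t : V} {n : ℕ}

theorem attachChains_adj_inl {u v : V} (h : G.Adj u v) :
    (attachChains G s t n).Adj (Sum.inl u) (Sum.inl v) :=
  (fromRel_adj _ _ _).2 ⟨by simp [h.ne], Or.inl (Or.inl ⟨u, v, h, rfl, rfl⟩)⟩

theorem attachChains_adj_inl_zero (h : 0 < 2 * n) :
    (attachChains G s t n).Adj (Sum.inl s) (Sum.inr (Sum.inl ⟨0, h⟩)) :=
  (fromRel_adj _ _ _).2 ⟨by simp, Or.inl (Or.inr (Or.inl ⟨h, rfl, rfl⟩))⟩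

theorem attachChains_adj_succ {i j : Fin (2 * n)} (h : (i : ℕ) + 1 = j) :
    (attachChains G s t n).Adj (Sum.inr (Sum.inl i)) (Sum.inr (Sum.inl j)) :=
  (fromRel_adj _ _ _).2
    ⟨by simp [Fin.ext_iff]; omega, Or.inl (Or.inr (Or.inr (Or.inl ⟨i, j, h, rfl, rfl⟩)))⟩

def swapChains : V ⊕ (Fin (2 * n) ⊕ Fin (2 * n)) ≃ V ⊕ (Fin (2 * n) ⊕ Fin (2 * n)) :=
  Equiv.sumCongr (Equiv.refl V) (Equiv.sumComm _ _)

theorem swapChains_swapChains (x : V ⊕ (Fin (2 * n) ⊕ Fin (2 * n))) :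
    swapChains (swapChains x) = x := by
  rcases x with v | j | j <;> rfl

theorem attachChains_adj_swapChains {x y : V ⊕ (Fin (2 * n) ⊕ Fin (2 * n))}
    (h : (attachChains G s t n).Adj x y) :
    (attachChains G t s n).Adj (swapChains x) (swapChains y) := by
  rw [attachChains, fromRel_adj] at h ⊢
  refine ⟨swapChains.injective.ne h.1, h.2.imp ?_ ?_⟩ <;>
  · rintro (⟨u, v, huv, rfl, rfl⟩ | ⟨hp, rfl, rfl⟩ | ⟨i, j, hij, rfl, rfl⟩ |
      ⟨hp, rfl, rfl⟩ | ⟨i, j, hij, rfl, rfl⟩)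
    · exact Or.inl ⟨u, v, huv, rfl, rfl⟩
    · exact Or.inr (Or.inr (Or.inr (Or.inl ⟨hp, rfl, rfl⟩)))
    · exact Or.inr (Or.inr (Or.inr (Or.inr ⟨i, j, hij, rfl, rfl⟩)))
    · exact Or.inr (Or.inl ⟨hp, rfl, rfl⟩)
    · exact Or.inr (Or.inr (Or.inl ⟨i, j, hij, rfl, rfl⟩))

def attachChainsSwap : attachChains G s t n ≃g attachChains G t s n where
  toEquiv := swapChains
  map_rel_iff' := ⟨fun h => by simpa [swapChains_swapChains] using
    attachChains_adj_swapChains h, attachChains_adj_swapChains⟩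

theorem edist_inl_inr_inl_le (j : Fin (2 * n)) :
    (attachChains G s t n).edist (Sum.inl s) (Sum.inr (Sum.inl j)) ≤ (j + 1 : ℕ) := by
  obtain ⟨j, hj⟩ := j
  induction j with
  | zero => simpa using (edist_eq_one_iff_adj.2 (attachChains_adj_inl_zero hj)).le
  | succ j ih =>
    calc _ ≤ (attachChains G s t n).edist (Sum.inl s) (Sum.inr (Sum.inl ⟨j, by omega⟩)) +
          (attachChains G s t n).edist (Sum.inr (Sum.inl ⟨j, by omega⟩))
            (Sum.inr (Sum.inl ⟨j + 1, hj⟩)) := SimpleGraph.edist_triangle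
      _ ≤ (j + 1 : ℕ) + 1 := add_le_add (ih _) (edist_eq_one_iff_adj.2
          (attachChains_adj_succ rfl)).le
      _ = (j + 1 + 1 : ℕ) := by push_cast; rfl

theorem edist_inl_inr_inr_le (j : Fin (2 * n)) :
    (attachChains G s t n).edist (Sum.inl t) (Sum.inr (Sum.inr j)) ≤ (j + 1 : ℕ) := by
  rw [← attachChainsSwap.edist_eq]
  exact edist_inl_inr_inl_le j

def attachChainsInl : G →g attachChains G s t n := ⟨Sum.inl, attachChains_adj_inl⟩

theorem attachChains_connected (hconn : G.Connected) : (attachChains G s t n).Connected := by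
  have hinl (v) : (attachChains G s t n).Reachable (Sum.inl s) (Sum.inl v) :=
    (hconn s v).map attachChainsInl
  refine (connected_iff_exists_forall_reachable _).2 ⟨Sum.inl s, ?_⟩
  rintro (v | j | j)
  · exact hinl v
  · exact reachable_of_edist_ne_top (ne_top_of_le_ne_top (by simp) (edist_inl_inr_inl_le j))
  · exact (hinl t).trans
      (reachable_of_edist_ne_top (ne_top_of_le_ne_top (by simp) (edist_inl_inr_inr_le j)))

variable (G s t n) in
/-- Up to an additive constant, the distance to the end of the `t`-chain. -/
noncomputable def chainPotential : V ⊕ (Fin (2 * n) ⊕ Fin (2 * n)) → ℤ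
  | .inl v => G.dist t v + 1
  | .inr (.inl j) => G.dist t s + j + 2
  | .inr (.inr j) => -j

theorem abs_chainPotential_sub_le_one ⦃x y : V ⊕ (Fin (2 * n) ⊕ Fin (2 * n))⦄
    (h : (attachChains G s t n).Adj x y) :
    |chainPotential G s t n x - chainPotential G s t n y| ≤ 1 := by
  refine abs_sub_le_one_of_fromRel_adj ?_ h
  rintro _ _ (⟨u, v, huv, rfl, rfl⟩ | ⟨hp, rfl, rfl⟩ | ⟨i, j, hij, rfl, rfl⟩ |
      ⟨hp, rfl, rfl⟩ | ⟨i, j, hij, rfl, rfl⟩)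
  · simpa [chainPotential] using huv.abs_dist_sub_dist_le_one t
  all_goals simp only [chainPotential, SimpleGraph.dist_self]; rw [abs_le]
  all_goals constructor <;> push_cast <;> omega

variable [Fintype V]

theorem edist_inr_inr_le (hconn : G.Connected) (hcard : Fintype.card V ≤ 2 * n)
    {i : Fin (2 * n)} (hi : (i : ℕ) = 2 * n - 1) (w : V ⊕ (Fin (2 * n) ⊕ Fin (2 * n))) :
    (attachChains G s t n).edist (Sum.inr (Sum.inr i)) w ≤ (4 * n + G.dist s t : ℕ) := by
  have hq : (attachChains G s t n).edist (Sum.inr (Sum.inr i)) (Sum.inl t) ≤ (2 * n : ℕ) := by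
    rw [edist_comm]
    exact (edist_inl_inr_inr_le i).trans (by norm_cast; omega)
  have hG (u v : V) : (attachChains G s t n).edist (Sum.inl u) (Sum.inl v) ≤ G.dist u v :=
    (attachChainsInl.edist_le u v).trans (hconn u v).coe_dist_eq_edist.ge
  have htv (v : V) : G.dist t v < 2 * n := by
    obtain ⟨p, hp, hlen⟩ := hconn.exists_path_of_dist t v
    exact hlen ▸ hp.length_lt.trans_le hcard
  have htri := @SimpleGraph.edist_triangle _ (attachChains G s t n) (Sum.inr (Sum.inr i))
    (Sum.inl t) w
  rcases w with v | j | j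
  · refine htri.trans ((add_le_add hq (hG t v)).trans ?_)
    have := htv v
    norm_cast
    omega
  · have hp := SimpleGraph.edist_triangle.trans
      (add_le_add (hG t s) (edist_inl_inr_inl_le (G := G) (t := t) j))
    refine htri.trans ((add_le_add hq hp).trans ?_)
    have := j.isLt
    rw [dist_comm]
    norm_cast
    omega
  · refine htri.trans ((add_le_add hq (edist_inl_inr_inr_le j)).trans ?_)
    have := j.isLt
    norm_cast
    omega

theorem gecc_attachChains_inr_inr (hconn : G.Connected) (hcard : Fintype.card V ≤ 2 * n)
    {i : Fin (2 * n)} (hi : (i : ℕ) = 2 * n - 1) :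
    gecc (attachChains G s t n) (Sum.inr (Sum.inr i)) = 4 * n + G.dist s t := by
  have hle (w) :=
    ENat.toNat_le_of_le_natCast (edist_inr_inr_le (s := s) (t := t) hconn hcard hi w)
  refine le_antisymm (Finset.sup_le fun w _ => hle w) ?_
  have hlow := ((attachChains_connected (s := s) (t := t) hconn) (Sum.inr (Sum.inr i))
    (Sum.inr (Sum.inl i))).abs_sub_le_dist abs_chainPotential_sub_le_one
  have := dist_le_gecc (H := attachChains G s t n) (Sum.inr (Sum.inr i)) (Sum.inr (Sum.inl i))
  simp only [chainPotential, abs_le, dist_comm (u := t)] at hlow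
  omega

theorem gecc_attachChains_inr_inl (hconn : G.Connected) (hcard : Fintype.card V ≤ 2 * n)
    {i : Fin (2 * n)} (hi : (i : ℕ) = 2 * n - 1) :
    gecc (attachChains G s t n) (Sum.inr (Sum.inl i)) = 4 * n + G.dist s t := by
  rw [← attachChainsSwap.gecc_eq, dist_comm]
  exact gecc_attachChains_inr_inr hconn hcard hi

end Chains

/-- let `G` be a connected finite simple graph on `n` vertices, `s t` vertices
of `G`, and `G' = attachChains G s t n` the graph obtained by attaching chains of `2n` new
vertices to `s` and to `t`.  Let `K` be obtained from two disjoint copies of `G'` by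
identifying the vertex `q_{2n}` (i.e. `Sum.inr (Sum.inr i)` with `(i : ℕ) = 2n - 1`) of the
first copy with the vertex `p_{2n}` (i.e. `Sum.inr (Sum.inl i)`) of the second copy, and
let `c = Sum.inl (Sum.inr (Sum.inr i))` be the identified vertex.  Then
`radius(K) = 4n + dist_G(s,t)`, and `c` is the unique vertex of `K` of minimum
eccentricity. -/
theorem stmt_8 {V : Type} [Fintype V] [DecidableEq V] (n : ℕ)
    (hcard : Fintype.card V = n) (G : SimpleGraph V) (hconn : G.Connected) (s t : V) :
    ∀ i : Fin (2 * n), (i : ℕ) = 2 * n - 1 →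
      gradius (glueGraph (attachChains G s t n)
          (Sum.inr (Sum.inr i)) (Sum.inr (Sum.inl i))) = 4 * n + G.dist s t ∧
      gecc (glueGraph (attachChains G s t n) (Sum.inr (Sum.inr i)) (Sum.inr (Sum.inl i)))
          (Sum.inl (Sum.inr (Sum.inr i)))
        = gradius (glueGraph (attachChains G s t n)
            (Sum.inr (Sum.inr i)) (Sum.inr (Sum.inl i))) ∧
      (∀ x, gecc (glueGraph (attachChains G s t n)
              (Sum.inr (Sum.inr i)) (Sum.inr (Sum.inl i))) x
            = gradius (glueGraph (attachChains G s t n)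
                (Sum.inr (Sum.inr i)) (Sum.inr (Sum.inl i))) →
          x = Sum.inl (Sum.inr (Sum.inr i))) := by
  intro i hi
  have hcard' : Fintype.card V ≤ 2 * n := by omega
  have hq := gecc_attachChains_inr_inr (s := s) (t := t) hconn hcard' hi
  have hp := gecc_attachChains_inr_inl (s := s) (t := t) hconn hcard' hi
  have hH := attachChains_connected (s := s) (t := t) (n := n) hconn
  have hlt (x) (hx : x ≠ _) := gecc_glueGraph_inl_lt hH (hp.trans hq.symm) hx
  have hrad := gradius_eq_gecc_of_forall_lt hlt
  refine ⟨hrad.trans ((gecc_glueGraph_inl hH (hp.trans hq.symm)).trans hq), hrad.symm,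
    fun x hx => ?_⟩
  by_contra hne
  exact (hlt x hne).ne' (hx.trans hrad)
end
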